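/- arXiv:2210.11443 — 4 statements merged into one kernel-verified Lean document; each statement's English description precedes it below -/
import Mathlib

section
/- Let A₁, A₂ be 3×4 real matrices of rank 3 whose kernels are distinct lines in ℝ⁴, and let F be the associated fundamental matrix defined by F_{ij} = (-1)^{i+j} det [A₁ without row j; A₂ without row i]. Then F has rank exactly 2. -/
open Matrix

/-- The 4×4 matrix obtained by stacking `A₁` with row `j` deleted on top of
`A₂` with row `i` deleted. -/
noncomputable def stackedMinor (A₁ A₂ : Matrix (Fin 3) (Fin 4) ℝ)
    (i j : Fin 3) : Matrix (Fin 4) (Fin 4) ℝ :=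
  Matrix.reindex finSumFinEquiv (Equiv.refl (Fin 4))
    (Matrix.fromRows (A₁.submatrix j.succAbove id) (A₂.submatrix i.succAbove id))

/-- The fundamental matrix of the camera pair `(A₁, A₂)`. -/
noncomputable def fundamentalMatrix (A₁ A₂ : Matrix (Fin 3) (Fin 4) ℝ) :
    Matrix (Fin 3) (Fin 3) ℝ :=
  fun i j => (-1 : ℝ) ^ ((i : ℕ) + (j : ℕ)) * (stackedMinor A₁ A₂ i j).det

/-!
Right-multiplying both cameras by an invertible `H` multiplies `F` by `det H`, so we may assume
`A₁ = [I | 0]`. Writing `A₂ = [B | b]`, a direct expansion gives `F = [-b]ₓ B`, where `b` is the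
image under `A₂` of the centre of `A₁`, nonzero because the centres differ. As `[B | b]` has
rank 3, the column space of `B` together with `b` is all of `ℝ³`, and `[-b]ₓ` kills `b`; hence
`F` has the same column space as `[-b]ₓ`, which has rank 2.
-/

namespace Matrix

def crossMatrix {R : Type*} [Ring R] (b : Fin 3 → R) : Matrix (Fin 3) (Fin 3) R :=
  !![0, -b 2, b 1; b 2, 0, -b 0; -b 1, b 0, 0]

def stdProjection (R : Type*) [Zero R] [One R] (m : ℕ) : Matrix (Fin m) (Fin (m + 1)) R :=
  Matrix.of fun i j => if Fin.castSucc i = j then 1 else 0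

section Field

variable {K : Type*} [Field K]

theorem rank_mul_eq_left_of_codisjoint {l m n : Type*} [Fintype m] [Fintype n]
    {X : Matrix l m K} {B : Matrix m n K}
    (h : Codisjoint (LinearMap.range B.mulVecLin) (LinearMap.ker X.mulVecLin)) :
    (X * B).rank = X.rank := by
  have hmap : (LinearMap.range B.mulVecLin).map X.mulVecLin = LinearMap.range X.mulVecLin :=
    le_antisymm LinearMap.map_le_range <| LinearMap.range_le_iff_comap.2 <| by
      rw [Submodule.comap_map_eq, h.eq_top]
  rw [rank, rank, mulVecLin_mul, LinearMap.range_comp, hmap]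

theorem rank_add_finrank_ker {m n : Type*} [Fintype n] (A : Matrix m n K) :
    A.rank + Module.finrank K (LinearMap.ker A.mulVecLin) = Fintype.card n := by
  rw [rank, LinearMap.finrank_range_add_finrank_ker, Module.finrank_fintype_fun_eq_card]

theorem mulVec_eq_mulVec_castSucc_add {m : Type*} {n : ℕ} (A : Matrix m (Fin (n + 1)) K)
    (x : Fin (n + 1) → K) :
    A *ᵥ x = A.submatrix id Fin.castSucc *ᵥ (x ∘ Fin.castSucc) +
      x (Fin.last n) • A.col (Fin.last n) := by
  ext i
  simp [mulVec, dotProduct, Fin.sum_univ_castSucc, mul_comm]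

theorem crossMatrix_mulVec {R : Type*} [CommRing R] (b v : Fin 3 → R) :
    crossMatrix b *ᵥ v = b ⨯₃ v := by
  ext i
  fin_cases i <;> simp [crossMatrix, cross_apply, mulVec, dotProduct, Fin.sum_univ_three] <;> ring

theorem ker_crossMatrix {b : Fin 3 → K} (hb : b ≠ 0) :
    LinearMap.ker (crossMatrix b).mulVecLin = K ∙ b := by
  ext v
  rw [LinearMap.mem_ker, mulVecLin_apply, crossMatrix_mulVec, Submodule.mem_span_singleton,
    ← not_iff_not, ← ne_eq, crossProduct_ne_zero_iff_linearIndependent,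
    LinearIndependent.pair_iff' hb, not_exists]

theorem rank_crossMatrix {b : Fin 3 → K} (hb : b ≠ 0) : (crossMatrix b).rank = 2 := by
  have h := (crossMatrix b).rank_add_finrank_ker
  rw [ker_crossMatrix hb, finrank_span_singleton hb, Fintype.card_fin] at h
  omega

theorem rank_crossMatrix_neg_col_mul_submatrix (A : Matrix (Fin 3) (Fin 4) K)
    (hA : A.rank = 3) (hb : A.col 3 ≠ 0) :
    (crossMatrix (-A.col 3) * A.submatrix id Fin.castSucc).rank = 2 := by
  rw [rank_mul_eq_left_of_codisjoint, rank_crossMatrix (neg_ne_zero.2 hb)]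
  have hrange : LinearMap.range A.mulVecLin = ⊤ :=
    Submodule.eq_top_of_finrank_eq (by rw [Module.finrank_fin_fun]; exact hA)
  rw [codisjoint_iff, eq_top_iff, ← hrange]
  rintro _ ⟨x, rfl⟩
  rw [mulVecLin_apply, mulVec_eq_mulVec_castSucc_add]
  refine Submodule.add_mem_sup (LinearMap.mem_range_self _ _) (Submodule.smul_mem _ _ ?_)
  simp [crossMatrix_mulVec]

variable {m : ℕ}

theorem stdProjection_mul {n R : Type*} [Semiring R] (G : Matrix (Fin (m + 1)) n R) :
    stdProjection R m * G = G.submatrix Fin.castSucc id := by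
  ext i j
  simp [stdProjection, mul_apply]

theorem stdProjection_col_last {R : Type*} [Zero R] [One R] :
    (stdProjection R m).col (Fin.last m) = 0 := by
  ext i
  simp [stdProjection, Fin.castSucc_ne_last]

theorem finrank_ker_mulVecLin_eq_one {A : Matrix (Fin m) (Fin (m + 1)) K} (hA : A.rank = m) :
    Module.finrank K (LinearMap.ker A.mulVecLin) = 1 := by
  have h := A.rank_add_finrank_ker
  rw [hA, Fintype.card_fin] at h
  omega

theorem ker_mulVecLin_eq_span_of_rank_eq {A : Matrix (Fin m) (Fin (m + 1)) K}
    (hA : A.rank = m) {c : Fin (m + 1) → K} (hc : A *ᵥ c = 0) (hc0 : c ≠ 0) :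
    LinearMap.ker A.mulVecLin = K ∙ c :=
  eq_span_singleton_of_mem_of_finrank_eq_one (finrank_ker_mulVecLin_eq_one hA) hc hc0

theorem exists_isUnit_det_mul_eq_stdProjection {A : Matrix (Fin m) (Fin (m + 1)) K}
    (hA : A.rank = m) :
    ∃ H : Matrix (Fin (m + 1)) (Fin (m + 1)) K, IsUnit H.det ∧ A * H = stdProjection K m := by
  have hker := finrank_ker_mulVecLin_eq_one hA
  obtain ⟨k, hk, hk0⟩ := Submodule.exists_mem_ne_zero_of_ne_bot
      (p := LinearMap.ker A.mulVecLin) fun h => by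
    rw [h, finrank_bot] at hker
    exact zero_ne_one hker
  obtain ⟨p, hp⟩ : ∃ p, k p ≠ 0 := Function.ne_iff.1 hk0
  -- `A` with the row `eₚᵀ` appended; it is invertible because `eₚᵀ k ≠ 0` and `ker A = K ∙ k`.
  let G : Matrix (Fin (m + 1)) (Fin (m + 1)) K :=
    Matrix.of fun i => Fin.lastCases (Pi.single p 1) (fun i => A i) i
  have hAG : stdProjection K m * G = A := by
    rw [stdProjection_mul]
    ext i j
    simp only [G, of_apply, submatrix_apply, id, Fin.lastCases_castSucc]
  have hG : IsUnit G.det := by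
    rw [← isUnit_iff_isUnit_det, ← mulVec_injective_iff_isUnit, ← coe_mulVecLin,
      ← LinearMap.ker_eq_bot, ker_mulVecLin_eq_bot_iff]
    intro x hx
    have hAx : x ∈ LinearMap.ker A.mulVecLin := by
      rw [LinearMap.mem_ker, mulVecLin_apply, ← hAG, ← mulVec_mulVec, hx, mulVec_zero]
    rw [eq_span_singleton_of_mem_of_finrank_eq_one hker hk hk0] at hAx
    obtain ⟨t, rfl⟩ := Submodule.mem_span_singleton.1 hAx
    have htk : t * k p = 0 := by simpa [G, mulVec] using congrFun hx (Fin.last m)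
    simp [(mul_eq_zero.1 htk).resolve_right hp]
  exact ⟨G⁻¹, isUnit_nonsing_inv_det G hG, by rw [← hAG, mul_nonsing_inv_cancel_right _ _ hG]⟩

end Field

end Matrix

theorem stackedMinor_eq (A₁ A₂ : Matrix (Fin 3) (Fin 4) ℝ) (i j : Fin 3) :
    stackedMinor A₁ A₂ i j = Matrix.of
      ![A₁ (j.succAbove 0), A₁ (j.succAbove 1), A₂ (i.succAbove 0), A₂ (i.succAbove 1)] := by
  ext k l
  fin_cases k <;> rfl

theorem stackedMinor_mul_mul (A₁ A₂ : Matrix (Fin 3) (Fin 4) ℝ) (H : Matrix (Fin 4) (Fin 4) ℝ)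
    (i j : Fin 3) :
    stackedMinor (A₁ * H) (A₂ * H) i j = stackedMinor A₁ A₂ i j * H := by
  simp only [stackedMinor, reindex_apply, Equiv.refl_symm, Equiv.coe_refl, ← fromRows_mul,
    ← submatrix_mul_equiv _ _ _ (Equiv.refl _), submatrix_id_id]

theorem fundamentalMatrix_mul_mul (A₁ A₂ : Matrix (Fin 3) (Fin 4) ℝ)
    (H : Matrix (Fin 4) (Fin 4) ℝ) :
    fundamentalMatrix (A₁ * H) (A₂ * H) = H.det • fundamentalMatrix A₁ A₂ := by
  ext i j
  simp only [fundamentalMatrix, stackedMinor_mul_mul, det_mul, Matrix.smul_apply, smul_eq_mul]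
  ring

theorem fundamentalMatrix_stdProjection (A : Matrix (Fin 3) (Fin 4) ℝ) :
    fundamentalMatrix (stdProjection ℝ 3) A =
      crossMatrix (-A.col 3) * A.submatrix id Fin.castSucc := by
  ext i j
  rw [fundamentalMatrix, stackedMinor_eq]
  fin_cases i <;> fin_cases j <;>
    simp [det_succ_row_zero, Fin.sum_univ_succ, crossMatrix, stdProjection, mul_apply,
      Fin.succAbove] <;> ring

theorem fundamentalMatrix_rank_eq_two
    (A₁ A₂ : Matrix (Fin 3) (Fin 4) ℝ)
    (hA₁ : A₁.rank = 3) (hA₂ : A₂.rank = 3)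
    (hker : LinearMap.ker A₁.mulVecLin ≠ LinearMap.ker A₂.mulVecLin) :
    (fundamentalMatrix A₁ A₂).rank = 2 := by
  obtain ⟨H, hH, hA₁H⟩ := exists_isUnit_det_mul_eq_stdProjection hA₁
  set c := H *ᵥ Pi.single 3 1
  have hc : A₁ *ᵥ c = 0 := by
    rw [mulVec_mulVec, hA₁H, mulVec_single_one]
    exact stdProjection_col_last
  have hc0 : c ≠ 0 :=
    ((mulVec_injective_iff_isUnit.2 ((isUnit_iff_isUnit_det H).2 hH)).ne_iff' (mulVec_zero H)).2
      (Pi.single_ne_zero_iff.2 one_ne_zero)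
  have hepipole : (A₂ * H).col 3 ≠ 0 := by
    rw [← mulVec_single_one, ← mulVec_mulVec]
    intro hc₂
    exact hker <| (ker_mulVecLin_eq_span_of_rank_eq hA₁ hc hc0).trans
      (ker_mulVecLin_eq_span_of_rank_eq hA₂ hc₂ hc0).symm
  calc (fundamentalMatrix A₁ A₂).rank
      = (H.det • fundamentalMatrix A₁ A₂).rank :=
        (rank_smul_of_mem_nonZeroDivisors _ (mem_nonZeroDivisors_of_ne_zero hH.ne_zero)).symm
    _ = (crossMatrix (-(A₂ * H).col 3) * (A₂ * H).submatrix id Fin.castSucc).rank := by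
        rw [← fundamentalMatrix_mul_mul, hA₁H, fundamentalMatrix_stdProjection]
    _ = 2 := rank_crossMatrix_neg_col_mul_submatrix _
        (by rwa [rank_mul_eq_left_of_isUnit_det _ _ hH]) hepipole
end

section
/- Let E ∈ ℝ^{3×3} be a nonzero matrix satisfying E Eᵀ E = (1/2) trace(E Eᵀ) E and det E = 0. Then the two largest singular values of E are equal and the smallest is zero. -/
open Matrix

/-!
Multiplying the cubic equation on the left by `Eᵀ` shows that `M = EᵀE` satisfies `M² = c M`
with `c = tr(EEᵀ)/2`, so every eigenvalue of the symmetric matrix `M` is `0` or `c`. The three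
eigenvalues sum to `tr M = 2c`, hence two of them equal `c` and the third is `0` (if `c = 0`, all
of them vanish). The singular values of `E` are their square roots.
-/

theorem Matrix.IsHermitian.eigenvalues_eq_zero_or_eq_of_mul_self_eq_smul
    {n 𝕜 : Type*} [Fintype n] [DecidableEq n] [RCLike 𝕜] {A : Matrix n n 𝕜}
    (hA : A.IsHermitian) {c : ℝ} (h : A * A = (c : 𝕜) • A) (i : n) :
    hA.eigenvalues i = 0 ∨ hA.eigenvalues i = c := by
  set v : n → 𝕜 := ⇑(hA.eigenvectorBasis i)
  set μ : 𝕜 := (hA.eigenvalues i : 𝕜)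
  have hv : A *ᵥ v = μ • v := by
    rw [hA.mulVec_eigenvectorBasis i, RCLike.real_smul_eq_coe_smul (K := 𝕜)]
  have hv0 : v ≠ 0 := (WithLp.ofLp_eq_zero 2).ne.2 <| hA.eigenvectorBasis.orthonormal.ne_zero i
  have hsq_smul : (μ * μ) • v = (c * μ : 𝕜) • v := by
    calc (μ * μ) • v = (A * A) *ᵥ v := by
          rw [← mulVec_mulVec, hv, mulVec_smul, hv, smul_smul]
      _ = (c * μ : 𝕜) • v := by rw [h, smul_mulVec, hv, smul_smul]
  have hμ : μ * (μ - c) = 0 := by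
    linear_combination smul_left_injective 𝕜 hv0 hsq_smul
  simpa [μ, sub_eq_zero] using hμ

theorem Fin.univ_val_map_eq_of_eq_zero_or_eq_of_sum_eq_two_mul {f : Fin 3 → ℝ} {c : ℝ}
    (hf : ∀ i, f i = 0 ∨ f i = c) (hsum : ∑ i, f i = 2 * c) :
    Finset.univ.val.map f = {c, c, 0} := by
  change {f 0, f 1, f 2} = _
  rw [Fin.sum_univ_three] at hsum
  rcases hf 0 with h0 | h0 <;> rcases hf 1 with h1 | h1 <;> rcases hf 2 with h2 | h2 <;>
    rw [h0, h1, h2] at hsum ⊢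
  -- a wrong number of `c`s forces `c = 0`
  all_goals first
    | simp only [Multiset.insert_eq_cons, ← Multiset.singleton_add]; abel; done
    | obtain rfl : c = 0 := by linarith
      rfl

theorem demazure_implies_singular_values_general
    (E : Matrix (Fin 3) (Fin 3) ℝ)
    (hcubic : E * Eᵀ * E = (1 / 2 * (E * Eᵀ).trace) • E)
    (hHerm : (Eᵀ * E).IsHermitian) :
    ∃ s : ℝ, 0 ≤ s ∧
      (Finset.univ.val.map fun i : Fin 3 => Real.sqrt (hHerm.eigenvalues i)) =
        {s, s, 0} := by
  obtain ⟨c, hc⟩ : ∃ c : ℝ, 1 / 2 * (E * Eᵀ).trace = c := ⟨_, rfl⟩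
  rw [hc] at hcubic
  have hsq : Eᵀ * E * (Eᵀ * E) = c • (Eᵀ * E) := by
    rw [mul_assoc, ← mul_assoc E, hcubic, Matrix.mul_smul]
  have hsum : ∑ i, hHerm.eigenvalues i = 2 * c := by
    have := hHerm.trace_eq_sum_eigenvalues
    rw [trace_mul_comm] at this
    simp only [RCLike.ofReal_real_eq_id, id] at this
    linarith
  have hvals := Fin.univ_val_map_eq_of_eq_zero_or_eq_of_sum_eq_two_mul
    (hHerm.eigenvalues_eq_zero_or_eq_of_mul_self_eq_smul hsq) hsum
  refine ⟨√c, Real.sqrt_nonneg c, ?_⟩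
  simpa [Multiset.map_map] using congrArg (Multiset.map Real.sqrt) hvals

theorem demazure_implies_singular_values
    (E : Matrix (Fin 3) (Fin 3) ℝ) (hE : E ≠ 0)
    (hcubic : E * Eᵀ * E = (1 / 2 * (E * Eᵀ).trace) • E)
    (hdet : E.det = 0)
    (hHerm : (Eᵀ * E).IsHermitian) :
    ∃ s : ℝ, 0 ≤ s ∧
      (Finset.univ.val.map fun i : Fin 3 => Real.sqrt (hHerm.eigenvalues i)) =
        {s, s, 0} :=
  demazure_implies_singular_values_general E hcubic hHerm
end

section
/- Let I be a zero-dimensional radical ideal in ℝ[x₁,…,x_n] (or ℂ[x₁,…,x_n]) with finite vanishing set V = {v₁,…,v_N} ⊂ ℂⁿ of cardinality N equal to the dimension of the quotient ring. Let P be a polynomial with P(v_i) ≠ P(v_j) for i ≠ j, and let B = {b₁,…,b_N} reduce to a vector space basis of ℂ[x]/I. Then the matrix M of multiplication by P in the basis B is diagonalizable, and for each i, P(v_i) is an eigenvalue of M with left eigenvector (b₁(v_i),…,b_N(v_i)). -/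
open Matrix MvPolynomial

open Module

/-!
Evaluation at a point `v i` of the variety factors through `ℂ[x]/I` as a character `φ i`. For any
character `φ`, the row `(φ (b j))_j` is a left eigenvector of the matrix of multiplication by `a`,
with eigenvalue `φ a`. Stacking these rows gives `W` with `W * M = diagonal (P (v i)) * W`, and `W`
is invertible because `W` times the coordinate matrix of `1, P, …, P ^ (N - 1)` is the Vandermonde
matrix of the pairwise distinct values `P (v i)`.
-/

namespace Module.Basis

variable {ι R M : Type*} [Fintype ι] [CommSemiring R] [AddCommMonoid M] [Module R M]

theorem sum_apply_mul_repr (b : Basis ι R M) (ψ : M →ₗ[R] R) (x : M) :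
    ∑ i, ψ (b i) * b.repr x i = ψ x := by
  conv_rhs => rw [← b.sum_repr x, map_sum]
  simp only [map_smul, smul_eq_mul, mul_comm]

theorem of_apply_mul_toMatrix {κ η : Type*} (b : Basis ι R M) (ψ : κ → M →ₗ[R] R) (x : η → M) :
    of (fun i j => ψ i (b j)) * b.toMatrix x = of fun i k => ψ i (x k) := by
  ext i k
  simp [mul_apply, Basis.toMatrix_apply, b.sum_apply_mul_repr]

end Module.Basis

theorem LinearMap.vecMul_toMatrix {ι κ R M : Type*} [Fintype ι] [Fintype κ] [DecidableEq κ]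
    [CommSemiring R] [AddCommMonoid M] [Module R M] (b : Basis κ R M) (b' : Basis ι R M)
    (ψ : M →ₗ[R] R) (f : M →ₗ[R] M) :
    (fun i => ψ (b' i)) ᵥ* LinearMap.toMatrix b b' f = fun j => ψ (f (b j)) := by
  ext j
  simp [vecMul, dotProduct, LinearMap.toMatrix_apply, b'.sum_apply_mul_repr]

theorem AlgHom.vecMul_toMatrix_mulLeft {ι K A : Type*} [Fintype ι] [DecidableEq ι]
    [CommSemiring K] [Semiring A] [Algebra K A] (φ : A →ₐ[K] K) (b : Basis ι K A) (a : A) :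
    (fun i => φ (b i)) ᵥ* LinearMap.toMatrix b b (LinearMap.mulLeft K a) =
      φ a • fun i => φ (b i) := by
  ext j
  simpa using congrFun (LinearMap.vecMul_toMatrix b b φ.toLinearMap (LinearMap.mulLeft K a)) j

theorem isUnit_of_apply_basis_of_injective {N : ℕ} {K A : Type*} [Field K] [Semiring A]
    [Algebra K A] (b : Basis (Fin N) K A) (φ : Fin N → A →ₐ[K] K) {a : A}
    (ha : Function.Injective fun i => φ i a) :
    IsUnit (of fun i j => φ i (b j)) := by
  have hvdm : of (fun i j => φ i (b j)) * b.toMatrix (fun k : Fin N => a ^ (k : ℕ)) =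
      vandermonde fun i => φ i a := by
    ext i k
    simpa using congrFun₂ (b.of_apply_mul_toMatrix (fun i => (φ i).toLinearMap)
      fun k : Fin N => a ^ (k : ℕ)) i k
  have hdet := det_vandermonde_ne_zero_iff.mpr ha
  rw [← hvdm, det_mul] at hdet
  exact (isUnit_iff_isUnit_det _).mpr (left_ne_zero_of_mul hdet).isUnit

namespace Matrix

variable {n α : Type*} [Fintype n] [DecidableEq n] [CommRing α]

theorem exists_isUnit_eq_mul_mul_inv_of_mul_eq {W M D : Matrix n n α} (hW : IsUnit W)
    (h : W * M = D * W) : ∃ Q, IsUnit Q ∧ M = Q * D * Q⁻¹ := by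
  have hdet := (isUnit_iff_isUnit_det W).mp hW
  refine ⟨W⁻¹, isUnit_nonsing_inv_iff.mpr hW, ?_⟩
  rw [nonsing_inv_nonsing_inv W hdet, Matrix.mul_assoc, ← h]
  exact (nonsing_inv_mul_cancel_left W M hdet).symm

end Matrix

namespace MvPolynomial

variable {σ R : Type*} [CommRing R]

noncomputable def quotientEval (I : Ideal (MvPolynomial σ R)) (x : σ → R)
    (hx : ∀ p ∈ I, eval x p = 0) : MvPolynomial σ R ⧸ I →ₐ[R] R :=
  Ideal.Quotient.liftₐ I (aeval x) hx

@[simp]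
theorem quotientEval_mk (I : Ideal (MvPolynomial σ R)) (x : σ → R)
    (hx : ∀ p ∈ I, eval x p = 0) (p : MvPolynomial σ R) :
    quotientEval I x hx (Ideal.Quotient.mk I p) = eval x p :=
  rfl

end MvPolynomial

theorem action_matrix_eigenvalue_theorem_general
    (n N : ℕ) (I : Ideal (MvPolynomial (Fin n) ℂ))
    (v : Fin N → (Fin n → ℂ))
    (hV : ∀ x : Fin n → ℂ,
      (∀ p ∈ I, MvPolynomial.eval x p = 0) ↔ ∃ i, x = v i)
    (P : MvPolynomial (Fin n) ℂ)
    (hsep : ∀ i j : Fin N, i ≠ j →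
      MvPolynomial.eval (v i) P ≠ MvPolynomial.eval (v j) P)
    (b : Fin N → MvPolynomial (Fin n) ℂ)
    (basis : Module.Basis (Fin N) ℂ (MvPolynomial (Fin n) ℂ ⧸ I))
    (hbasis : ∀ i, basis i = Ideal.Quotient.mk I (b i))
    (M : Matrix (Fin N) (Fin N) ℂ)
    (hM : M = LinearMap.toMatrix basis basis
      (LinearMap.mulLeft ℂ (Ideal.Quotient.mk I P))) :
    (∃ Q : Matrix (Fin N) (Fin N) ℂ, IsUnit Q ∧
        M = Q * Matrix.diagonal (fun i => MvPolynomial.eval (v i) P) * Q⁻¹) ∧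
      ∀ i : Fin N,
        Matrix.vecMul (fun j => MvPolynomial.eval (v i) (b j)) M =
          MvPolynomial.eval (v i) P • fun j => MvPolynomial.eval (v i) (b j) := by
  let φ i := quotientEval I (v i) ((hV (v i)).mpr ⟨i, rfl⟩)
  have hφ_basis i j : φ i (basis j) = eval (v i) (b j) := by simp [φ, hbasis]
  have hφ_P i : φ i (Ideal.Quotient.mk I P) = eval (v i) P := quotientEval_mk ..
  have heigen i :
      (fun j => eval (v i) (b j)) ᵥ* M = eval (v i) P • fun j => eval (v i) (b j) := by
    simpa only [hM, hφ_basis, hφ_P] using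
      (φ i).vecMul_toMatrix_mulLeft basis (Ideal.Quotient.mk I P)
  have hW : IsUnit (of fun i j => eval (v i) (b j)) := by
    simpa only [hφ_basis] using
      isUnit_of_apply_basis_of_injective basis φ (a := Ideal.Quotient.mk I P) fun i j hij =>
        by_contra fun hne => hsep i j hne (by simpa only [hφ_P] using hij)
  refine ⟨exists_isUnit_eq_mul_mul_inv_of_mul_eq hW ?_, heigen⟩
  ext i j
  rw [mul_apply_eq_vecMul, diagonal_mul]
  exact congrFun (heigen i) j

theorem action_matrix_eigenvalue_theorem
    (n N : ℕ) (I : Ideal (MvPolynomial (Fin n) ℂ)) (hrad : I.IsRadical)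
    (v : Fin N → (Fin n → ℂ)) (hv : Function.Injective v)
    (hV : ∀ x : Fin n → ℂ,
      (∀ p ∈ I, MvPolynomial.eval x p = 0) ↔ ∃ i, x = v i)
    (hdim : Module.finrank ℂ (MvPolynomial (Fin n) ℂ ⧸ I) = N)
    (P : MvPolynomial (Fin n) ℂ)
    (hsep : ∀ i j : Fin N, i ≠ j →
      MvPolynomial.eval (v i) P ≠ MvPolynomial.eval (v j) P)
    (b : Fin N → MvPolynomial (Fin n) ℂ)
    (basis : Module.Basis (Fin N) ℂ (MvPolynomial (Fin n) ℂ ⧸ I))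
    (hbasis : ∀ i, basis i = Ideal.Quotient.mk I (b i))
    (M : Matrix (Fin N) (Fin N) ℂ)
    (hM : M = LinearMap.toMatrix basis basis
      (LinearMap.mulLeft ℂ (Ideal.Quotient.mk I P))) :
    (∃ Q : Matrix (Fin N) (Fin N) ℂ, IsUnit Q ∧
        M = Q * Matrix.diagonal (fun i => MvPolynomial.eval (v i) P) * Q⁻¹) ∧
      ∀ i : Fin N,
        Matrix.vecMul (fun j => MvPolynomial.eval (v i) (b j)) M =
          MvPolynomial.eval (v i) P • fun j => MvPolynomial.eval (v i) (b j) :=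
  action_matrix_eigenvalue_theorem_general n N I v hV P hsep b basis hbasis M hM
end

section
/- Let I be a zero-dimensional ideal in ℂ[x₁,…,x_n] and P a polynomial. Then every eigenvalue of the multiplication-by-P operator on ℂ[x₁,…,x_n]/I is of the form P(v) for some point v in the vanishing set of I. -/
/-!
An eigenvector of multiplication by `P` makes `P - μ` a zero divisor, hence a non-unit, in
`ℂ[x] ⧸ I`. So `P - μ` lies in a maximal ideal containing `I`, and by the Nullstellensatz that
ideal is the ideal of a point `v`, which is then a common zero of `I` with `P v = μ`.
-/

open MvPolynomial

theorem mem_spectrum_of_hasEigenvalue_mulLeft {R A : Type*} [CommRing R] [Ring A] [Algebra R A]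
    {a : A} {μ : R} (h : Module.End.HasEigenvalue (LinearMap.mulLeft R a) μ) :
    μ ∈ spectrum R a := by
  obtain ⟨x, hx⟩ := h.exists_hasEigenvector
  have hax : (algebraMap R A μ - a) * x = 0 := by
    rw [sub_mul, ← Algebra.smul_def, ← hx.apply_eq_smul, LinearMap.mulLeft_apply, sub_self]
  exact spectrum.mem_iff.mpr fun hu => hx.2 (hu.mul_right_eq_zero.mp hax)

theorem Ideal.exists_isMaximal_of_not_isUnit_mk {R : Type*} [CommRing R] {I : Ideal R} {p : R}
    (h : ¬IsUnit (Ideal.Quotient.mk I p)) : ∃ J : Ideal R, J.IsMaximal ∧ I ≤ J ∧ p ∈ J := by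
  obtain ⟨m, hm, hpm⟩ := exists_max_ideal_of_mem_nonunits h
  refine ⟨m.comap (Ideal.Quotient.mk I),
    Ideal.comap_isMaximal_of_surjective _ Ideal.Quotient.mk_surjective, fun q hq => ?_, hpm⟩
  simp [Ideal.mem_comap, Ideal.Quotient.eq_zero_iff_mem.mpr hq]

theorem MvPolynomial.exists_eval_eq_of_mem_spectrum_mk {σ k : Type*} [Finite σ] [Field k]
    [IsAlgClosed k] {I : Ideal (MvPolynomial σ k)} {P : MvPolynomial σ k} {μ : k}
    (h : μ ∈ spectrum k (Ideal.Quotient.mk I P)) :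
    ∃ v : σ → k, (∀ p ∈ I, eval v p = 0) ∧ eval v P = μ := by
  have hunit : ¬IsUnit (Ideal.Quotient.mk I (C μ - P)) := spectrum.mem_iff.mp h
  obtain ⟨J, hJ, hIJ, hJμ⟩ := Ideal.exists_isMaximal_of_not_isUnit_mk hunit
  obtain ⟨v, rfl⟩ := eq_vanishingIdeal_singleton_of_isMaximal k hJ
  have eval_eq_zero {p} (hp : p ∈ vanishingIdeal k {v}) : eval v p = 0 := by
    simpa [coe_aeval_eq_eval] using (mem_vanishingIdeal_singleton_iff v p).mp hp
  refine ⟨v, fun p hp => eval_eq_zero (hIJ hp), ?_⟩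
  rw [eq_comm, ← sub_eq_zero]
  simpa using eval_eq_zero hJμ

theorem eigenvalue_is_value_at_root_general
    (n : ℕ) (I : Ideal (MvPolynomial (Fin n) ℂ))
    (P : MvPolynomial (Fin n) ℂ) (μ : ℂ)
    (hμ : Module.End.HasEigenvalue
      (LinearMap.mulLeft ℂ (Ideal.Quotient.mk I P)) μ) :
    ∃ v : Fin n → ℂ, (∀ p ∈ I, MvPolynomial.eval v p = 0) ∧
      MvPolynomial.eval v P = μ :=
  exists_eval_eq_of_mem_spectrum_mk (mem_spectrum_of_hasEigenvalue_mulLeft hμ)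

theorem eigenvalue_is_value_at_root
    (n : ℕ) (I : Ideal (MvPolynomial (Fin n) ℂ)) (hI : I ≠ ⊤)
    (hfin : FiniteDimensional ℂ (MvPolynomial (Fin n) ℂ ⧸ I))
    (P : MvPolynomial (Fin n) ℂ) (μ : ℂ)
    (hμ : Module.End.HasEigenvalue
      (LinearMap.mulLeft ℂ (Ideal.Quotient.mk I P)) μ) :
    ∃ v : Fin n → ℂ, (∀ p ∈ I, MvPolynomial.eval v p = 0) ∧
      MvPolynomial.eval v P = μ :=
  eigenvalue_is_value_at_root_general n I P μ hμ
end
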